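/- For every z ∈ ℂ with z ≠ 0 and every v = (v₁, v₂) ∈ ℂ², one has |v·g(z)|² − |conj(v)·g(conj z)|² = −(4√(a²+1)/κ) · Im(v₁ · conj(v₂) / z), where v·g(z) = v₁g(z)₁ + v₂g(z)₂ and conj(v) = (conj v₁, conj v₂). -/

import Mathlib

open Complex

/-- The column-vector-valued function
`g(z) = √(a−i) · (i/(κz), 1)ᵀ` (principal branch of the square root). -/
noncomputable def gvec (a κ : ℝ) (z : ℂ) : Fin 2 → ℂ :=
  (((a : ℂ) - I) ^ ((1 : ℂ) / 2)) • ![I / ((κ : ℂ) * z), 1]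

open ComplexConjugate

/-! Writing `s = √(a−i)` and `w = v₁ · i/(κz)`, one has `v·g(z) = s (w + v₂)` and, since
`i/(κ z̄) = −conj (i/(κz))`, also `v̄·g(z̄) = s · conj (v₂ − w)`. The difference of squared norms is
then `|s|² (|w + v₂|² − |w − v₂|²) = 4 |a − i| Re (w v̄₂)` by polarization, and
`Re (i x / κ) = −Im x / κ`. -/

lemma Complex.sq_norm_cpow_one_div_two (x : ℂ) : ‖x ^ ((1 : ℂ) / 2)‖ ^ 2 = ‖x‖ := by
  rw [← norm_pow, one_div, cpow_ofNat_inv_pow]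

lemma Complex.norm_ofReal_sub_I (a : ℝ) : ‖(a : ℂ) - I‖ = Real.sqrt (a ^ 2 + 1) := by
  rw [norm_def, normSq_apply]
  congr 1
  simp only [sub_re, sub_im, ofReal_re, ofReal_im, I_re, I_im]
  ring

lemma Complex.sq_norm_add_sub_sq_norm_sub (x y : ℂ) :
    ‖x + y‖ ^ 2 - ‖x - y‖ ^ 2 = 4 * (x * conj y).re := by
  rw [Complex.sq_norm, Complex.sq_norm, normSq_add, normSq_sub]
  ring

lemma Complex.re_I_mul_div_ofReal (x : ℂ) (r : ℝ) : (I * x / r).re = -x.im / r := by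
  rw [div_ofReal_re, I_mul_re]

lemma dotProduct_gvec (a κ : ℝ) (z : ℂ) (v : Fin 2 → ℂ) :
    v 0 * gvec a κ z 0 + v 1 * gvec a κ z 1
      = ((a : ℂ) - I) ^ ((1 : ℂ) / 2) * (v 0 * (I / (κ * z)) + v 1) := by
  simp only [gvec, Pi.smul_apply, Matrix.cons_val_zero, Matrix.cons_val_one, smul_eq_mul]
  ring

lemma conj_dotProduct_gvec_conj (a κ : ℝ) (z : ℂ) (v : Fin 2 → ℂ) :
    conj (v 0) * gvec a κ (conj z) 0 + conj (v 1) * gvec a κ (conj z) 1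
      = ((a : ℂ) - I) ^ ((1 : ℂ) / 2) * conj (v 1 - v 0 * (I / (κ * z))) := by
  simp only [gvec, Pi.smul_apply, Matrix.cons_val_zero, Matrix.cons_val_one, smul_eq_mul,
    map_sub, map_mul, map_div₀, conj_I, conj_ofReal]
  ring

theorem stmt10_general (a κ : ℝ) (z : ℂ) (v : Fin 2 → ℂ) :
    ‖v 0 * gvec a κ z 0 + v 1 * gvec a κ z 1‖ ^ 2
      - ‖(starRingEnd ℂ) (v 0) * gvec a κ ((starRingEnd ℂ) z) 0
          + (starRingEnd ℂ) (v 1) * gvec a κ ((starRingEnd ℂ) z) 1‖ ^ 2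
    = -(4 * Real.sqrt (a ^ 2 + 1) / κ)
        * ((v 0 * (starRingEnd ℂ) (v 1)) / z).im := by
  set w := v 0 * (I / (κ * z))
  have w_mul_conj : w * conj (v 1) = I * (v 0 * conj (v 1) / z) / κ := by
    simp only [w]
    ring
  calc _ = ‖((a : ℂ) - I) ^ ((1 : ℂ) / 2)‖ ^ 2 * (‖w + v 1‖ ^ 2 - ‖w - v 1‖ ^ 2) := by
        rw [dotProduct_gvec, conj_dotProduct_gvec_conj, norm_mul, norm_mul, norm_conj,
          norm_sub_rev (v 1)]
        ring
    _ = Real.sqrt (a ^ 2 + 1) * (4 * (w * conj (v 1)).re) := by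
        rw [sq_norm_cpow_one_div_two, norm_ofReal_sub_I, sq_norm_add_sub_sq_norm_sub]
    _ = _ := by
        rw [w_mul_conj, re_I_mul_div_ofReal]
        ring

/-- With `a = √(α₁/β_ℓ)` and `κ = √(α₁ β_ℓ)`, for every `z ≠ 0` and `v ∈ ℂ²`:
`|v·g(z)|² − |v̄·g(z̄)|² = −(4√(a²+1)/κ)·Im(v₁ v̄₂ / z)`. -/
theorem stmt10 (α₁ βℓ : ℝ) (hα : 0 < α₁) (hβ : 0 < βℓ)
    (a κ : ℝ) (ha : a = Real.sqrt (α₁ / βℓ)) (hκ : κ = Real.sqrt (α₁ * βℓ))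
    (z : ℂ) (hz : z ≠ 0) (v : Fin 2 → ℂ) :
    ‖v 0 * gvec a κ z 0 + v 1 * gvec a κ z 1‖ ^ 2
      - ‖(starRingEnd ℂ) (v 0) * gvec a κ ((starRingEnd ℂ) z) 0
          + (starRingEnd ℂ) (v 1) * gvec a κ ((starRingEnd ℂ) z) 1‖ ^ 2
    = -(4 * Real.sqrt (a ^ 2 + 1) / κ)
        * ((v 0 * (starRingEnd ℂ) (v 1)) / z).im :=
  stmt10_general a κ z v
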